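/- Let S be a positive definite symmetric integral m×m matrix and Ω ∈ H_n. Define q_{S,Ω}(W) = (1/2) σ(S W (Ω−Ω̄)^{-1} ᵗW), H_{S,Ω}(W₁,W₂) = 2i σ(S W₁ (Ω−Ω̄)^{-1} ᵗW̄₂), and ψ_{S,Ω}(ξ,η) = exp(πi σ(S η ᵗξ)). For a function F : ℂ^{(m,n)} → ℂ set G(W) = exp(2πi q_{S,Ω}(W)) F(W). Then F satisfies F(W+ξΩ+η) = exp(−πi σ(S(ξΩᵗξ + 2ξᵗW))) F(W) for all integer m×n matrices ξ, η and all W ∈ ℂ^{(m,n)} if and only if G satisfies G(W+l) = exp(π H_{S,Ω}(W + l/2, l)) ψ_{S,Ω}(ξ,η) G(W) for all integer m×n matrices ξ, η, where l = ξΩ+η, and all W ∈ ℂ^{(m,n)}. -/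
import Mathlib


open Matrix

/-- The quadratic form `q_{S,Ω}(W) = (1/2) σ(S W (Ω−Ω̄)⁻¹ ᵗW)`. -/
noncomputable def qform {m n : ℕ} (S : Matrix (Fin m) (Fin m) ℝ)
    (Ω : Matrix (Fin n) (Fin n) ℂ) (W : Matrix (Fin m) (Fin n) ℂ) : ℂ :=
  (1/2 : ℂ) * Matrix.trace (S.map Complex.ofReal * W * (Ω - Ω.map (starRingEnd ℂ))⁻¹ * Wᵀ)

/-- The Hermitian form `H_{S,Ω}(W₁,W₂) = 2i σ(S W₁ (Ω−Ω̄)⁻¹ ᵗW̄₂)`. -/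
noncomputable def Hform {m n : ℕ} (S : Matrix (Fin m) (Fin m) ℝ)
    (Ω : Matrix (Fin n) (Fin n) ℂ) (W₁ W₂ : Matrix (Fin m) (Fin n) ℂ) : ℂ :=
  2 * Complex.I * Matrix.trace (S.map Complex.ofReal * W₁ *
    (Ω - Ω.map (starRingEnd ℂ))⁻¹ * (W₂.map (starRingEnd ℂ))ᵀ)

/-- The second-degree character `ψ_{S,Ω}(ξ,η) = exp(πi σ(S η ᵗξ))`. -/
noncomputable def psiSO {m n : ℕ} (S : Matrix (Fin m) (Fin m) ℝ)
    (ξ η : Matrix (Fin m) (Fin n) ℤ) : ℂ :=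
  Complex.exp ((Real.pi : ℂ) * Complex.I * Complex.ofReal
    (Matrix.trace (S * η.map (Int.cast : ℤ → ℝ) * (ξ.map (Int.cast : ℤ → ℝ))ᵀ)))

section Aux

variable {m n : ℕ}

lemma tr_symm_aux (A : Matrix (Fin m) (Fin m) ℂ) (P : Matrix (Fin n) (Fin n) ℂ)
    (hA : Aᵀ = A) (hP : Pᵀ = P) (U V : Matrix (Fin m) (Fin n) ℂ) :
    Matrix.trace (A * U * P * Vᵀ) = Matrix.trace (A * V * P * Uᵀ) := by
  rw [← Matrix.trace_transpose (A * U * P * Vᵀ)]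
  simp only [Matrix.transpose_mul, Matrix.transpose_transpose, hA, hP]
  rw [show V * (P * (Uᵀ * A)) = (V * P * Uᵀ) * A by simp [Matrix.mul_assoc],
    Matrix.trace_mul_comm]
  simp [Matrix.mul_assoc]

lemma tr_symm2_aux (A : Matrix (Fin m) (Fin m) ℂ) (hA : Aᵀ = A)
    (U V : Matrix (Fin m) (Fin n) ℂ) :
    Matrix.trace (A * U * Vᵀ) = Matrix.trace (A * V * Uᵀ) := by
  rw [← Matrix.trace_transpose (A * U * Vᵀ)]
  simp only [Matrix.transpose_mul, Matrix.transpose_transpose, hA]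
  rw [Matrix.mul_assoc, Matrix.trace_mul_comm, Matrix.mul_assoc]
  rw [Matrix.trace_mul_comm, Matrix.mul_assoc]

lemma main_trace_aux (A : Matrix (Fin m) (Fin m) ℂ) (Ω D : Matrix (Fin n) (Fin n) ℂ)
    (X Y W : Matrix (Fin m) (Fin n) ℂ) (hA : Aᵀ = A) (hD : Dᵀ = D) (hP : D⁻¹ᵀ = D⁻¹)
    (hPD : D⁻¹ * D = 1) :
    Matrix.trace (A * (W + (X*Ω + Y)) * D⁻¹ * (W + (X*Ω+Y))ᵀ)
      = 2 * Matrix.trace (A * (W + (1/2:ℂ) • (X*Ω+Y)) * D⁻¹ * ((X*Ω+Y) - X*D)ᵀ)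
        + Matrix.trace (A*Y*Xᵀ) + Matrix.trace (A*W*D⁻¹*Wᵀ)
        + Matrix.trace (A*(X*Ω)*Xᵀ) + 2 * Matrix.trace (A*X*Wᵀ) := by
  have h1 : ∀ U : Matrix (Fin m) (Fin n) ℂ, A * U * D⁻¹ * (X*D)ᵀ = A * U * Xᵀ := by
    intro U
    rw [Matrix.transpose_mul, hD, Matrix.mul_assoc (A * U), ← Matrix.mul_assoc D⁻¹, hPD,
      Matrix.one_mul]
  simp only [Matrix.transpose_sub, Matrix.transpose_add, Matrix.mul_sub, Matrix.sub_mul,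
    Matrix.mul_add, Matrix.add_mul, Matrix.smul_mul, Matrix.mul_smul, Matrix.transpose_smul,
    Matrix.trace_add, Matrix.trace_sub, Matrix.trace_smul, smul_eq_mul, h1]
  rw [tr_symm_aux A D⁻¹ hA hP (X*Ω) W, tr_symm_aux A D⁻¹ hA hP Y W, tr_symm2_aux A hA W X]
  ring

end Aux

/-- `F` transforms like a theta function of level `S` w.r.t. `Ω` if and only if
`G(W) = exp(2πi q_{S,Ω}(W)) F(W)` is a normalized theta function of type
`(H_{S,Ω}, ψ_{S,Ω})` for the lattice `L_Ω = ℤ^{(m,n)}Ω + ℤ^{(m,n)}`. -/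
theorem stmt3 {m n : ℕ} (S : Matrix (Fin m) (Fin m) ℝ) (hSpos : S.PosDef) (hSsymm : S.IsSymm)
    (hSint : ∀ i j, ∃ z : ℤ, S i j = (z : ℝ))
    (Ω : Matrix (Fin n) (Fin n) ℂ) (hΩsymm : Ω.IsSymm)
    (hΩim : (Matrix.of fun i j => (Ω i j).im).PosDef)
    (F : Matrix (Fin m) (Fin n) ℂ → ℂ) :
    (∀ (ξ η : Matrix (Fin m) (Fin n) ℤ) (W : Matrix (Fin m) (Fin n) ℂ),
        F (W + ξ.map (Int.cast : ℤ → ℂ) * Ω + η.map (Int.cast : ℤ → ℂ)) =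
          Complex.exp (-((Real.pi : ℂ) * Complex.I) * Matrix.trace (S.map Complex.ofReal *
            (ξ.map (Int.cast : ℤ → ℂ) * Ω * (ξ.map (Int.cast : ℤ → ℂ))ᵀ +
              2 • (ξ.map (Int.cast : ℤ → ℂ) * Wᵀ)))) * F W) ↔
    (∀ (ξ η : Matrix (Fin m) (Fin n) ℤ) (W : Matrix (Fin m) (Fin n) ℂ),
        Complex.exp (2 * (Real.pi : ℂ) * Complex.I *
            qform S Ω (W + (ξ.map (Int.cast : ℤ → ℂ) * Ω + η.map (Int.cast : ℤ → ℂ)))) *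
          F (W + (ξ.map (Int.cast : ℤ → ℂ) * Ω + η.map (Int.cast : ℤ → ℂ))) =
        Complex.exp ((Real.pi : ℂ) *
            Hform S Ω
              (W + (1/2 : ℂ) • (ξ.map (Int.cast : ℤ → ℂ) * Ω + η.map (Int.cast : ℤ → ℂ)))
              (ξ.map (Int.cast : ℤ → ℂ) * Ω + η.map (Int.cast : ℤ → ℂ))) *
          psiSO S ξ η *
          (Complex.exp (2 * (Real.pi : ℂ) * Complex.I * qform S Ω W) * F W)) := by
  set A : Matrix (Fin m) (Fin m) ℂ := S.map Complex.ofReal with hAdef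
  set D : Matrix (Fin n) (Fin n) ℂ := Ω - Ω.map (starRingEnd ℂ) with hDdef
  -- basic symmetry facts
  have hA : Aᵀ = A := by
    rw [hAdef, ← Matrix.transpose_map, hSsymm.eq]
  have hD : Dᵀ = D := by
    rw [hDdef, Matrix.transpose_sub, hΩsymm.eq, ← Matrix.transpose_map, hΩsymm.eq]
  have hP : D⁻¹ᵀ = D⁻¹ := by rw [Matrix.transpose_nonsing_inv, hD]
  -- invertibility of D
  have hDeq : D = (2 * Complex.I) • ((Matrix.of fun i j => (Ω i j).im).map Complex.ofReal) := by
    ext i j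
    simp only [hDdef, Matrix.sub_apply, Matrix.map_apply, Matrix.smul_apply, Matrix.of_apply,
      smul_eq_mul]
    rw [Complex.sub_conj]
    push_cast
    ring
  have hdet : IsUnit D.det := by
    rw [hDeq, Matrix.det_smul]
    have h1 : ((Matrix.of fun i j => (Ω i j).im).map Complex.ofReal).det
        = Complex.ofReal ((Matrix.of fun i j => (Ω i j).im).det) := by
      have h2 := RingHom.map_det Complex.ofRealHom (Matrix.of fun i j => (Ω i j).im)
      rw [RingHom.mapMatrix_apply] at h2
      exact h2.symm
    rw [h1]
    apply IsUnit.mul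
    · exact (IsUnit.pow _ (by simp [Complex.I_ne_zero] : IsUnit (2 * Complex.I)))
    · simp only [isUnit_iff_ne_zero, ne_eq, Complex.ofReal_eq_zero]
      exact ne_of_gt hΩim.det_pos
  have hPD : D⁻¹ * D = 1 := Matrix.nonsing_inv_mul D hdet
  -- the key exponential identity
  have key : ∀ (ξ η : Matrix (Fin m) (Fin n) ℤ) (W : Matrix (Fin m) (Fin n) ℂ),
      Complex.exp (2 * (Real.pi : ℂ) * Complex.I *
          qform S Ω (W + (ξ.map (Int.cast : ℤ → ℂ) * Ω + η.map (Int.cast : ℤ → ℂ)))) *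
        Complex.exp (-((Real.pi : ℂ) * Complex.I) * Matrix.trace (A *
            (ξ.map (Int.cast : ℤ → ℂ) * Ω * (ξ.map (Int.cast : ℤ → ℂ))ᵀ +
              2 • (ξ.map (Int.cast : ℤ → ℂ) * Wᵀ)))) =
      Complex.exp ((Real.pi : ℂ) *
          Hform S Ω
            (W + (1/2 : ℂ) • (ξ.map (Int.cast : ℤ → ℂ) * Ω + η.map (Int.cast : ℤ → ℂ)))
            (ξ.map (Int.cast : ℤ → ℂ) * Ω + η.map (Int.cast : ℤ → ℂ))) *
        psiSO S ξ η *
        Complex.exp (2 * (Real.pi : ℂ) * Complex.I * qform S Ω W) := by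
    intro ξ η W
    set X : Matrix (Fin m) (Fin n) ℂ := ξ.map (Int.cast : ℤ → ℂ) with hXdef
    set Y : Matrix (Fin m) (Fin n) ℂ := η.map (Int.cast : ℤ → ℂ) with hYdef
    -- conjugate of the lattice vector
    have hconj : ((X * Ω + Y).map (starRingEnd ℂ)) = (X * Ω + Y) - X * D := by
      have hXc : X.map (starRingEnd ℂ) = X := by
        ext i j; simp [hXdef, Matrix.map_apply]
      have hYc : Y.map (starRingEnd ℂ) = Y := by
        ext i j; simp [hYdef, Matrix.map_apply]
      have : (X * Ω + Y).map (starRingEnd ℂ)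
          = X.map (starRingEnd ℂ) * Ω.map (starRingEnd ℂ) + Y.map (starRingEnd ℂ) := by
        rw [Matrix.map_add _ (by simp)]
        rw [Matrix.map_mul]
      rw [this, hXc, hYc, hDdef, Matrix.mul_sub]
      abel
    -- the ψ factor as a ℂ-trace
    have hpsi : Complex.ofReal
        (Matrix.trace (S * η.map (Int.cast : ℤ → ℝ) * (ξ.map (Int.cast : ℤ → ℝ))ᵀ))
        = Matrix.trace (A * Y * Xᵀ) := by
      rw [hAdef, hXdef, hYdef]
      simp only [Matrix.trace, Matrix.diag, Matrix.mul_apply, Matrix.map_apply,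
        Matrix.transpose_apply, Complex.ofReal_sum, Complex.ofReal_mul]
      push_cast
      rfl
    rw [show psiSO S ξ η = Complex.exp ((Real.pi : ℂ) * Complex.I *
        Matrix.trace (A * Y * Xᵀ)) by rw [psiSO, hpsi]]
    rw [← Complex.exp_add, ← Complex.exp_add, ← Complex.exp_add]
    congr 1
    simp only [qform, Hform, ← hAdef, ← hDdef, ← hXdef, ← hYdef, hconj]
    have MT := main_trace_aux A Ω D X Y W hA hD hP hPD
    simp only [Matrix.mul_add, Matrix.trace_add, two_smul, ← Matrix.mul_assoc] at MT ⊢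
    linear_combination ((Real.pi : ℂ) * Complex.I) * MT
  constructor
  · intro h ξ η W
    have h1 := h ξ η W
    rw [add_assoc] at h1
    rw [h1]
    linear_combination (F W) * key ξ η W
  · intro h ξ η W
    have h2 := h ξ η W
    have he : Complex.exp (2 * (Real.pi : ℂ) * Complex.I *
        qform S Ω (W + (ξ.map (Int.cast : ℤ → ℂ) * Ω + η.map (Int.cast : ℤ → ℂ)))) ≠ 0 :=
      Complex.exp_ne_zero _
    rw [show W + ξ.map (Int.cast : ℤ → ℂ) * Ω + η.map (Int.cast : ℤ → ℂ)
      = W + (ξ.map (Int.cast : ℤ → ℂ) * Ω + η.map (Int.cast : ℤ → ℂ)) from add_assoc _ _ _]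
    apply mul_left_cancel₀ he
    rw [h2]
    linear_combination (-(F W)) * key ξ η W
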